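/- arXiv:2311.00372 — 2 statements merged into one kernel-verified Lean document; each statement's English description precedes it below -/
import Mathlib

section
/- Let X ⊂ ℝ^d be a nonempty compact convex set with X ⊆ R̄·B_d, and let δ ∈ (0,1). Then for every x ∈ ℝ^d, ‖ P_X[x] − P_{(1−δ)X}[x] ‖ ≤ δ·R̄. -/
open MeasureTheory ProbabilityTheory Real Set Filter Pointwise
open scoped Classical ENNReal RealInnerProductSpace

noncomputable section

variable {d : ℕ}

/-- Euclidean metric projection onto a set: a nearest point of `C`, if one exists. -/
noncomputable def metricProj (C : Set (EuclideanSpace ℝ (Fin d)))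
    (x : EuclideanSpace ℝ (Fin d)) : EuclideanSpace ℝ (Fin d) :=
  if h : ∃ y, y ∈ C ∧ ∀ c ∈ C, dist x y ≤ dist x c then h.choose else x

/-- The standard Gaussian measure `N(0, I_d)` on `ℝ^d`. -/
noncomputable def stdGaussian (d : ℕ) : Measure (EuclideanSpace ℝ (Fin d)) :=
  (Measure.pi fun _ : Fin d => gaussianReal 0 1).map
    (MeasurableEquiv.toLp 2 (Fin d → ℝ))

/-- The uniform distribution on the sphere of radius `√d` in `ℝ^d`,
realized as the pushforward of the standard Gaussian under radial normalization. -/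
noncomputable def uniformSphere (d : ℕ) : Measure (EuclideanSpace ℝ (Fin d)) :=
  (stdGaussian d).map (fun z => (Real.sqrt d / ‖z‖) • z)

/-- The set `S(x,r) = {(s - x)/r : s ∈ X}`. -/
def sShift (X : Set (EuclideanSpace ℝ (Fin d))) (x : EuclideanSpace ℝ (Fin d)) (r : ℝ) :
    Set (EuclideanSpace ℝ (Fin d)) :=
  (fun s => r⁻¹ • (s - x)) '' X

/-- The law `Z(x,r)` of the Gaussian perturbation projected onto `S(x,r)`. -/
noncomputable def zDist (X : Set (EuclideanSpace ℝ (Fin d))) (x : EuclideanSpace ℝ (Fin d))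
    (r : ℝ) : Measure (EuclideanSpace ℝ (Fin d)) :=
  (stdGaussian d).map (metricProj (sShift X x r))

/-- `h` is `Λ`-Lipschitz on `X`. -/
def LipOn (h : EuclideanSpace ℝ (Fin d) → ℝ) (Λ : ℝ)
    (X : Set (EuclideanSpace ℝ (Fin d))) : Prop :=
  ∀ x ∈ X, ∀ y ∈ X, |h x - h y| ≤ Λ * ‖x - y‖

/-- `h` is `L`-smooth on `X`: differentiable with `L`-Lipschitz gradient on `X`. -/
def IsSmoothOn (h : EuclideanSpace ℝ (Fin d) → ℝ) (L : ℝ)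
    (X : Set (EuclideanSpace ℝ (Fin d))) : Prop :=
  Differentiable ℝ h ∧ ∀ x ∈ X, ∀ y ∈ X, ‖gradient h x - gradient h y‖ ≤ L * ‖x - y‖

/-- The gradient mapping `𝔤(x; M) = M (x - P_X[x - (1/M) ∇F(x)])`. -/
noncomputable def gradMap (X : Set (EuclideanSpace ℝ (Fin d)))
    (F : EuclideanSpace ℝ (Fin d) → ℝ) (M : ℝ) (x : EuclideanSpace ℝ (Fin d)) :
    EuclideanSpace ℝ (Fin d) :=
  M • (x - metricProj X (x - (1 / M) • gradient F x))

/-- The 2-ZFGD iterates, given a realization `zbar` of the Gaussian samples. -/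
noncomputable def zfgd (X : Set (EuclideanSpace ℝ (Fin d))) (δ η : ℝ) (r : ℕ → ℝ)
    (f φ : EuclideanSpace ℝ (Fin d) → ℝ) (zbar : ℕ → EuclideanSpace ℝ (Fin d))
    (x0 : EuclideanSpace ℝ (Fin d)) : ℕ → EuclideanSpace ℝ (Fin d)
  | 0 => x0
  | k + 1 =>
    let x := zfgd X δ η r f φ zbar x0 k
    let z := metricProj (sShift X x (r k)) (zbar k)
    metricProj ((1 - δ) • X)
      (x - η • (gradient f x + ((φ (x + r k • z) - φ x) / r k) • z))

/-- The box `Π_β [l β, u β] ⊆ ℝ^d`. -/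
def box (l u : Fin d → ℝ) : Set (EuclideanSpace ℝ (Fin d)) :=
  {x | ∀ β, x β ∈ Set.Icc (l β) (u β)}

/-- `h` is `(L 1, …, L d)`-coordinatewise smooth on `X`. -/
def CoordSmoothOn (h : EuclideanSpace ℝ (Fin d) → ℝ) (L : Fin d → ℝ)
    (X : Set (EuclideanSpace ℝ (Fin d))) : Prop :=
  Differentiable ℝ h ∧ ∀ (β : Fin d), ∀ x ∈ X, ∀ t : ℝ,
    x + t • EuclideanSpace.single β 1 ∈ X →
    |gradient h (x + t • EuclideanSpace.single β 1) β - gradient h x β| ≤ L β * |t|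

/-- Joint law of a pair: uniform coordinate on `Fin d` and uniform sign on `{-1, 1}`. -/
noncomputable def unifPair (d : ℕ) : Measure (Fin d × ℝ) :=
  (((d : ℝ≥0∞)⁻¹ • Measure.count : Measure (Fin d))).prod
    (((2 : ℝ≥0∞)⁻¹ • (Measure.dirac (-1) + Measure.dirac 1) : Measure ℝ))

/-- The RZFCD iterates, given realizations `a` of the coordinate draws and `s` of the
sign draws. -/
noncomputable def rzfcd (l u η : Fin d → ℝ) (r : Fin d → ℕ → ℝ)
    (f φ : EuclideanSpace ℝ (Fin d) → ℝ)
    (a : ℕ → Fin d) (s : ℕ → ℝ) (x0 : EuclideanSpace ℝ (Fin d)) :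
    ℕ → EuclideanSpace ℝ (Fin d)
  | 0 => x0
  | k + 1 =>
    let x := rzfcd l u η r f φ a s x0 k
    let β := a k
    let z : ℝ := if u β < x β + r β k then -1 else if x β - r β k < l β then 1 else s k
    let g : ℝ := gradient f x β +
      ((φ (x + (r β k * z) • EuclideanSpace.single β 1) - φ x) / r β k) * z
    WithLp.toLp 2 (Function.update x β (max (l β) (min (u β) (x β - η β * g))))

/-! Let `p = P_X x` and `P_{(1-δ)X} x = (1 - δ) s` with `s ∈ X`. The variational inequality of `p`
tested at `s`, added to that of `(1 - δ) s` tested at `(1 - δ) p` (divided by `1 - δ > 0`), gives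
`⟪p - (1 - δ) s, p - s⟫ ≤ 0`. Hence `‖p - (1 - δ) s‖` is at most the length of the difference of
these two vectors, which is `‖δ s‖ ≤ δ R̄`. -/

section Projection

variable {C : Set (EuclideanSpace ℝ (Fin d))}

theorem metricProj_mem_and_dist_le (hC : IsCompact C) (hne : C.Nonempty)
    (x : EuclideanSpace ℝ (Fin d)) :
    metricProj C x ∈ C ∧ ∀ c ∈ C, dist x (metricProj C x) ≤ dist x c := by
  have hex : ∃ y, y ∈ C ∧ ∀ c ∈ C, dist x y ≤ dist x c := by
    obtain ⟨y, hy, hmin⟩ :=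
      hC.exists_isMinOn hne (continuous_const.dist continuous_id).continuousOn
    exact ⟨y, hy, fun c hc => hmin hc⟩
  rw [metricProj, dif_pos hex]
  exact hex.choose_spec

theorem metricProj_mem (hC : IsCompact C) (hne : C.Nonempty) (x : EuclideanSpace ℝ (Fin d)) :
    metricProj C x ∈ C :=
  (metricProj_mem_and_dist_le hC hne x).1

theorem inner_sub_metricProj_nonpos (hC : IsCompact C) (hne : C.Nonempty) (hconv : Convex ℝ C)
    (x : EuclideanSpace ℝ (Fin d)) {c : EuclideanSpace ℝ (Fin d)} (hc : c ∈ C) :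
    ⟪x - metricProj C x, c - metricProj C x⟫ ≤ 0 := by
  obtain ⟨hp, hmin⟩ := metricProj_mem_and_dist_le hC hne x
  have : Nonempty C := ⟨⟨_, hp⟩⟩
  refine (norm_eq_iInf_iff_real_inner_le_zero hconv hp).1 (le_antisymm ?_ ?_) c hc
  · exact le_ciInf fun w => hmin w w.2
  · exact ciInf_le ⟨0, fun _ ⟨_, h⟩ => h ▸ norm_nonneg _⟩ (⟨_, hp⟩ : C)

end Projection

section InnerProductSpace

variable {E : Type*} [NormedAddCommGroup E] [InnerProductSpace ℝ E]

theorem norm_le_norm_sub_of_inner_nonpos {u v : E} (h : ⟪u, v⟫ ≤ 0) : ‖u‖ ≤ ‖u - v‖ := by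
  refine le_of_pow_le_pow_left₀ two_ne_zero (norm_nonneg _) ?_
  rw [norm_sub_sq_real]
  nlinarith [sq_nonneg ‖v‖]

theorem norm_sub_one_sub_smul_le {x p s : E} {δ : ℝ} (hδ : δ < 1)
    (hp : ⟪x - p, s - p⟫ ≤ 0) (hq : ⟪x - (1 - δ) • s, (1 - δ) • p - (1 - δ) • s⟫ ≤ 0) :
    ‖p - (1 - δ) • s‖ ≤ |δ| * ‖s‖ := by
  set q := (1 - δ) • s
  have hq' : ⟪x - q, p - s⟫ ≤ 0 := by
    rw [← smul_sub, real_inner_smul_right] at hq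
    exact nonpos_of_mul_nonpos_right hq (sub_pos.2 hδ)
  have hpq : ⟪p - q, p - s⟫ ≤ 0 := by
    have hp' : ⟪x - p, p - s⟫ = -⟪x - p, s - p⟫ := by rw [← inner_neg_right, neg_sub]
    rw [show p - q = (x - q) - (x - p) by abel, inner_sub_left, hp']
    linarith
  calc ‖p - q‖ ≤ ‖p - q - (p - s)‖ := norm_le_norm_sub_of_inner_nonpos hpq
    _ = |δ| * ‖s‖ := by
      rw [show p - q - (p - s) = δ • s by simp only [q]; module, norm_smul, Real.norm_eq_abs]

end InnerProductSpace

/-- Lemma 6 (distance between projections onto `X` and onto the shrunk set `(1-δ)X`). -/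
theorem proj_shrink_difference (d : ℕ) (Rhigh : ℝ)
    (X : Set (EuclideanSpace ℝ (Fin d))) (hne : X.Nonempty)
    (hXc : IsCompact X) (hXconv : Convex ℝ X) (hXu : X ⊆ Metric.closedBall 0 Rhigh)
    (δ : ℝ) (hδ0 : 0 < δ) (hδ1 : δ < 1) :
    ∀ x : EuclideanSpace ℝ (Fin d),
      ‖metricProj X x - metricProj ((1 - δ) • X) x‖ ≤ δ * Rhigh := by
  intro x
  have hXδc := hXc.smul (1 - δ)
  have hq := inner_sub_metricProj_nonpos hXδc hne.smul_set (hXconv.smul (1 - δ)) x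
    (smul_mem_smul_set (metricProj_mem hXc hne x))
  obtain ⟨s, hs, hqs⟩ := metricProj_mem hXδc hne.smul_set x
  rw [← hqs] at hq ⊢
  calc ‖metricProj X x - (1 - δ) • s‖ ≤ |δ| * ‖s‖ :=
      norm_sub_one_sub_smul_le hδ1 (inner_sub_metricProj_nonpos hXc hne hXconv x hs) hq
    _ ≤ δ * Rhigh := by
      rw [abs_of_pos hδ0]
      gcongr
      simpa using hXu hs

end
end

section
/- Let X ⊂ ℝ^d be a compact convex set, δ ∈ (0,1), and let F : X → ℝ be L_F-smooth. Let η ∈ (0, 1/(2L_F)], x ∈ (1−δ)X, g ∈ ℝ^d, and set x⁺ := P_{(1−δ)X}[x − η g]. Then for every x̃ ∈ (1−δ)X: (1/(2η))·( ‖x̃ − x⁺‖² − ‖x̃ − x‖² ) ≤ ⟨g, x̃ − x⟩ + η·‖g − ∇F(x)‖² + F(x) − F(x⁺). -/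
open MeasureTheory ProbabilityTheory Real Set Filter Pointwise
open scoped Classical ENNReal RealInnerProductSpace

noncomputable section

variable {d : ℕ}

/-!
Project the optimality condition of `x⁺ = P_C[x - η g]` onto the test point `x̃`:
`⟪x - η g - x⁺, x̃ - x⁺⟫ ≤ 0`. Splitting `g = (g - ∇F x) + ∇F x`, the error term is absorbed by
Young's inequality and the gradient term by the descent lemma
`F x⁺ ≤ F x + ⟪∇F x, x⁺ - x⟫ + (L/2)‖x⁺ - x‖²`, applicable because `(1 - δ) X ⊆ X` when `0 ∈ X`.
The step size condition `2ηL ≤ 1` makes the leftover `‖x - x⁺‖²` terms cancel.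
-/

open scoped Gradient

section

variable {E : Type*} [NormedAddCommGroup E] [InnerProductSpace ℝ E]

theorem Convex.descent_lemma [CompleteSpace E] {s : Set E} (hs : Convex ℝ s) {F : E → ℝ} {L : ℝ}
    (hF : ∀ y ∈ s, DifferentiableAt ℝ F y)
    (hL : ∀ y ∈ s, ∀ z ∈ s, ‖∇ F y - ∇ F z‖ ≤ L * ‖y - z‖) {x y : E} (hx : x ∈ s)
    (hy : y ∈ s) : F y ≤ F x + ⟪∇ F x, y - x⟫ + L / 2 * ‖y - x‖ ^ 2 := by
  set v := y - x
  have hseg : ∀ t ∈ Icc (0 : ℝ) 1, x + t • v ∈ s := fun t ht => hs.add_smul_sub_mem hx hy ht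
  -- `φ` is antitone on `[0, 1]`: its derivative is `⟪∇F(x + t v) - ∇F x, v⟫ - L t ‖v‖² ≤ 0`
  set φ : ℝ → ℝ := fun t => F (x + t • v) - t * ⟪∇ F x, v⟫ - L / 2 * t ^ 2 * ‖v‖ ^ 2
  have hφ : ∀ t ∈ Icc (0 : ℝ) 1,
      HasDerivAt φ (⟪∇ F (x + t • v), v⟫ - ⟪∇ F x, v⟫ - L * t * ‖v‖ ^ 2) t := by
    intro t ht
    have hline : HasDerivAt (fun t : ℝ => x + t • v) v t := by
      simpa using ((hasDerivAt_id t).smul_const v).const_add x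
    have hFline := (hF _ (hseg t ht)).hasGradientAt.hasFDerivAt.comp_hasDerivAt t hline
    have hpoly : HasDerivAt (fun t : ℝ => L / 2 * t ^ 2 * ‖v‖ ^ 2) (L * t * ‖v‖ ^ 2) t :=
      (((hasDerivAt_pow 2 t).const_mul (L / 2)).mul_const (‖v‖ ^ 2)).congr_deriv
        (by simp only [Nat.cast_ofNat, Nat.add_one_sub_one, pow_one]; ring)
    exact ((hFline.sub ((hasDerivAt_id t).mul_const ⟪∇ F x, v⟫)).sub hpoly).congr_deriv
      (by rw [InnerProductSpace.toDual_apply_apply, one_mul])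
  have hanti : AntitoneOn φ (Icc 0 1) := by
    refine antitoneOn_of_deriv_nonpos (convex_Icc 0 1)
      (fun t ht => (hφ t ht).continuousAt.continuousWithinAt)
      (fun t ht => (hφ t (interior_subset ht)).differentiableAt.differentiableWithinAt) ?_
    intro t ht
    rw [interior_Icc] at ht
    have ht' : t ∈ Icc (0 : ℝ) 1 := Ioo_subset_Icc_self ht
    rw [(hφ t ht').deriv, ← inner_sub_left]
    calc ⟪∇ F (x + t • v) - ∇ F x, v⟫ - L * t * ‖v‖ ^ 2
        ≤ ‖∇ F (x + t • v) - ∇ F x‖ * ‖v‖ - L * t * ‖v‖ ^ 2 := by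
          gcongr; exact real_inner_le_norm _ _
      _ ≤ L * ‖(x + t • v) - x‖ * ‖v‖ - L * t * ‖v‖ ^ 2 := by
          gcongr; exact hL _ (hseg t ht') _ hx
      _ = 0 := by
          rw [add_sub_cancel_left, norm_smul, Real.norm_of_nonneg ht'.1]; ring
  have := hanti ⟨le_rfl, zero_le_one⟩ ⟨zero_le_one, le_rfl⟩ zero_le_one
  simp only [φ, one_smul, zero_smul, add_zero, v, add_sub_cancel] at this
  linarith

theorem projected_step_bound {F : E → ℝ} {G g x p xt : E} {η L : ℝ} (hη : 0 < η)
    (hηL : 2 * η * L ≤ 1) (hproj : ⟪x - η • g - p, xt - p⟫ ≤ 0)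
    (hdesc : F p ≤ F x + ⟪G, p - x⟫ + L / 2 * ‖p - x‖ ^ 2) :
    1 / (2 * η) * (‖xt - p‖ ^ 2 - ‖xt - x‖ ^ 2) ≤
      ⟪g, xt - x⟫ + η * ‖g - G‖ ^ 2 + F x - F p := by
  have hsq : ‖xt - p‖ ^ 2 - ‖xt - x‖ ^ 2 = 2 * ⟪x - p, xt - p⟫ - ‖x - p‖ ^ 2 := by
    have h := norm_sub_sq_real (xt - p) (x - p)
    rw [sub_sub_sub_cancel_right, real_inner_comm] at h
    linarith
  have hvi : ⟪x - p, xt - p⟫ ≤ η * (⟪g, xt - x⟫ + ⟪g - G, x - p⟫ + ⟪G, x - p⟫) := by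
    have hsplit : ⟪g, xt - p⟫ = ⟪g, xt - x⟫ + ⟪g - G, x - p⟫ + ⟪G, x - p⟫ := by
      rw [← sub_add_sub_cancel xt x p, inner_add_right, inner_sub_left]
      ring
    rw [sub_right_comm, inner_sub_left, real_inner_smul_left, hsplit] at hproj
    linarith
  have hyoung : 4 * η * ⟪g - G, x - p⟫ ≤ 4 * η ^ 2 * ‖g - G‖ ^ 2 + ‖x - p‖ ^ 2 := by
    have h := norm_sub_sq_real ((2 * η) • (g - G)) (x - p)
    rw [norm_smul, real_inner_smul_left, Real.norm_of_nonneg (by positivity)] at h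
    linarith [sq_nonneg ‖(2 * η) • (g - G) - (x - p)‖]
  have hgrad : η * ⟪G, x - p⟫ ≤ η * (F x - F p + L / 2 * ‖x - p‖ ^ 2) := by
    rw [← neg_sub x p, inner_neg_right, norm_neg] at hdesc
    gcongr
    linarith
  have hstep : η * L * ‖x - p‖ ^ 2 ≤ ‖x - p‖ ^ 2 / 2 := by
    nlinarith [sq_nonneg ‖x - p‖]
  rw [one_div, inv_mul_le_iff₀ (by positivity)]
  linarith

end

theorem metricProj_spec {d : ℕ} {C : Set (EuclideanSpace ℝ (Fin d))} (hC : IsClosed C)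
    (hne : C.Nonempty) (u : EuclideanSpace ℝ (Fin d)) :
    metricProj C u ∈ C ∧ ∀ c ∈ C, dist u (metricProj C u) ≤ dist u c := by
  have hex : ∃ y, y ∈ C ∧ ∀ c ∈ C, dist u y ≤ dist u c := by
    obtain ⟨y, hy, hyd⟩ := hC.exists_infDist_eq_dist hne u
    exact ⟨y, hy, fun c hc => hyd ▸ Metric.infDist_le_dist_of_mem hc⟩
  rw [metricProj, dif_pos hex]
  exact hex.choose_spec

theorem Convex.inner_sub_metricProj_le_zero {d : ℕ} {C : Set (EuclideanSpace ℝ (Fin d))}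
    (hconv : Convex ℝ C) (hC : IsClosed C) (hne : C.Nonempty) (u : EuclideanSpace ℝ (Fin d))
    {c : EuclideanSpace ℝ (Fin d)} (hc : c ∈ C) :
    ⟪u - metricProj C u, c - metricProj C u⟫ ≤ 0 := by
  obtain ⟨hp, hmin⟩ := metricProj_spec hC hne u
  have : Nonempty C := hne.to_subtype
  refine (norm_eq_iInf_iff_real_inner_le_zero hconv hp).1 ?_ c hc
  have hbdd : BddBelow (Set.range fun w : C => ‖u - w‖) :=
    ⟨0, by rintro _ ⟨w, rfl⟩; exact norm_nonneg _⟩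
  refine le_antisymm (le_ciInf fun w => ?_) (ciInf_le hbdd ⟨metricProj C u, hp⟩)
  simpa only [dist_eq_norm] using hmin w w.2

/-- Lemma 7 (one-step descent inequality for projected SGD-type updates). -/
theorem projected_step_descent (d : ℕ) (X : Set (EuclideanSpace ℝ (Fin d)))
    (hXc : IsCompact X) (hXconv : Convex ℝ X) (h0 : (0 : EuclideanSpace ℝ (Fin d)) ∈ X)
    (δ : ℝ) (hδ0 : 0 < δ) (hδ1 : δ < 1)
    (F : EuclideanSpace ℝ (Fin d) → ℝ) (LF : ℝ) (hLF : 0 < LF)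
    (hF : IsSmoothOn F LF X)
    (η : ℝ) (hη0 : 0 < η) (hηL : η ≤ 1 / (2 * LF))
    (x : EuclideanSpace ℝ (Fin d)) (hx : x ∈ (1 - δ) • X)
    (g : EuclideanSpace ℝ (Fin d)) :
    ∀ xt ∈ (1 - δ) • X,
      (1 / (2 * η)) *
          (‖xt - metricProj ((1 - δ) • X) (x - η • g)‖ ^ 2 - ‖xt - x‖ ^ 2) ≤
        (inner ℝ g (xt - x) : ℝ) + η * ‖g - gradient F x‖ ^ 2
          + F x - F (metricProj ((1 - δ) • X) (x - η • g)) := by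
  intro xt hxt
  set C := (1 - δ) • X
  have hCX : C ⊆ X := by
    rintro _ ⟨s, hs, rfl⟩
    exact hXconv.smul_mem_of_zero_mem h0 hs ⟨by linarith, by linarith⟩
  have hCclosed : IsClosed C := (hXc.smul (1 - δ)).isClosed
  set p := metricProj C (x - η • g)
  have hpX : p ∈ X := hCX (metricProj_spec hCclosed ⟨x, hx⟩ _).1
  have h2ηL : 2 * η * LF ≤ 1 := by
    rw [le_div_iff₀ (by positivity)] at hηL
    linarith
  exact projected_step_bound hη0 h2ηL
    ((hXconv.smul (1 - δ)).inner_sub_metricProj_le_zero hCclosed ⟨x, hx⟩ _ hxt)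
    (hXconv.descent_lemma (fun y _ => hF.1 y) hF.2 (hCX hx) hpX)

end
end
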